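/- arXiv:0709.2667 — 5 statements merged into one kernel-verified Lean document; each statement's English description precedes it below -/
import Mathlib

section
/- For every matrix A in SL(2,ℝ), the operator norm of A equals e^{d(A·i, i)/2}, where A acts on the upper half-plane ℍ by Möbius transformations (A·w = (aw+b)/(cw+d)) and d is the hyperbolic distance on ℍ (with metric of curvature -1). -/
/-- Operator norm of a 2×2 real matrix, induced by the Euclidean norm on ℝ². -/
noncomputable def opNorm (A : Matrix (Fin 2) (Fin 2) ℝ) : ℝ :=
  ‖Matrix.toEuclideanCLM (𝕜 := ℝ) A‖

/-!
Write `F = a² + b² + c² + d²` for `A = [[a, b], [c, d]]`. On the hyperbolic side,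
`2 cosh d(A·i, i) = F`, so `t = e^{d(A·i, i)}` is the root `≥ 1` of `t + t⁻¹ = F`.
On the matrix side, `AᵀA` has trace `F` and determinant `1`, so its eigenvalues are
`t` and `t⁻¹`, and `‖A‖² = t`. Concretely, `t‖v‖² - ‖Av‖²` is the binary quadratic form
of `t - AᵀA`, which is positive semidefinite and singular; it is therefore nonnegative
and vanishes at some `v ≠ 0`.
-/

open Matrix UpperHalfPlane
open scoped MatrixGroups

theorem ContinuousLinearMap.opNorm_eq_of_le_of_norm_apply_eq {E F : Type*} [NormedAddCommGroup E]
    [SeminormedAddCommGroup F] [NormedSpace ℝ E] [NormedSpace ℝ F] (T : E →L[ℝ] F) {M : ℝ}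
    (hM : 0 ≤ M) (hle : ∀ x, ‖T x‖ ≤ M * ‖x‖) {x₀ : E} (hx₀ : x₀ ≠ 0)
    (heq : ‖T x₀‖ = M * ‖x₀‖) : ‖T‖ = M :=
  le_antisymm (T.opNorm_le_bound hM hle)
    ((mul_le_mul_iff_left₀ (norm_pos_iff.2 hx₀)).1 (heq ▸ T.le_opNorm x₀))

lemma EuclideanSpace.norm_sq_fin_two (v : EuclideanSpace ℝ (Fin 2)) :
    ‖v‖ ^ 2 = v 0 ^ 2 + v 1 ^ 2 := by
  simp [EuclideanSpace.norm_sq_eq, Fin.sum_univ_two]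

lemma Matrix.norm_sq_toEuclideanCLM_apply_fin_two (B : Matrix (Fin 2) (Fin 2) ℝ)
    (v : EuclideanSpace ℝ (Fin 2)) :
    ‖toEuclideanCLM (𝕜 := ℝ) B v‖ ^ 2 =
      (B 0 0 * v 0 + B 0 1 * v 1) ^ 2 + (B 1 0 * v 0 + B 1 1 * v 1) ^ 2 := by
  simp [EuclideanSpace.norm_sq_fin_two, mulVec, dotProduct, Fin.sum_univ_two]

section BinaryForm

variable {P R β : ℝ}

lemma binaryForm_nonneg_of_mul_eq_sq (hP : 0 ≤ P) (hR : 0 ≤ R) (h : P * R = β ^ 2)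
    (p q : ℝ) :
    0 ≤ P * p ^ 2 - 2 * β * p * q + R * q ^ 2 := by
  rcases hP.eq_or_lt with rfl | hP
  · obtain rfl : β = 0 := by simpa using h.symm
    simpa using mul_nonneg hR (sq_nonneg q)
  · have : 0 ≤ P * (P * p ^ 2 - 2 * β * p * q + R * q ^ 2) := by
      nlinarith [sq_nonneg (P * p - β * q)]
    exact nonneg_of_mul_nonneg_right (by linarith) hP

lemma exists_binaryForm_eq_zero_of_mul_eq_sq (h : P * R = β ^ 2) :
    ∃ p q : ℝ, (p ≠ 0 ∨ q ≠ 0) ∧ P * p ^ 2 - 2 * β * p * q + R * q ^ 2 = 0 := by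
  by_cases hP : P = 0
  · exact ⟨1, 0, by simp, by simp [hP]⟩
  · exact ⟨β, P, .inr hP, by linear_combination P * h⟩

end BinaryForm

lemma opNorm_eq_sqrt_of_det_eq_one (B : Matrix (Fin 2) (Fin 2) ℝ) (hB : B.det = 1) {t : ℝ}
    (ht : 1 ≤ t) (hF : t + t⁻¹ = B 0 0 ^ 2 + B 0 1 ^ 2 + B 1 0 ^ 2 + B 1 1 ^ 2) :
    opNorm B = √t := by
  rw [det_fin_two] at hB
  have ht0 : t ≠ 0 := by positivity
  set β := B 0 0 * B 0 1 + B 1 0 * B 1 1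
  set P := t - (B 0 0 ^ 2 + B 1 0 ^ 2)
  set R := t - (B 0 1 ^ 2 + B 1 1 ^ 2)
  have hPR : P * R = β ^ 2 := by
    field_simp at hF
    linear_combination hF + (B 0 0 * B 1 1 - B 0 1 * B 1 0 + 1) * hB
  have hPR_add : 0 ≤ P + R := by
    have : t⁻¹ ≤ t := inv_le_one_of_one_le₀ ht |>.trans ht
    linarith
  have hP : 0 ≤ P := by nlinarith [sq_nonneg β]
  have hR : 0 ≤ R := by nlinarith [sq_nonneg β]
  have hform (v : EuclideanSpace ℝ (Fin 2)) :
      (√t * ‖v‖) ^ 2 - ‖toEuclideanCLM (𝕜 := ℝ) B v‖ ^ 2 =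
        P * v 0 ^ 2 - 2 * β * v 0 * v 1 + R * v 1 ^ 2 := by
    rw [mul_pow, Real.sq_sqrt (by positivity), EuclideanSpace.norm_sq_fin_two,
      norm_sq_toEuclideanCLM_apply_fin_two]
    ring
  obtain ⟨p, q, hpq, hzero⟩ := exists_binaryForm_eq_zero_of_mul_eq_sq hPR
  refine ContinuousLinearMap.opNorm_eq_of_le_of_norm_apply_eq _ (Real.sqrt_nonneg t)
    (fun v ↦ ?_) (x₀ := !₂[p, q]) ?_ ?_
  · refine le_of_sq_le_sq ?_ (by positivity)
    linarith [hform v, binaryForm_nonneg_of_mul_eq_sq hP hR hPR (v 0) (v 1)]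
  · rintro h
    rcases hpq with hp | hq
    · exact hp (by simpa using congrArg (· 0) h)
    · exact hq (by simpa using congrArg (· 1) h)
  · refine (sq_eq_sq₀ (norm_nonneg _) (by positivity)).1 ?_
    have := hform !₂[p, q]
    simp only [cons_val_zero, cons_val_one, cons_val_fin_one] at this
    linarith

lemma UpperHalfPlane.re_SL_smul_I (g : SL(2, ℝ)) :
    (g • I).re = (g 0 0 * g 1 0 + g 0 1 * g 1 1) / (g 1 0 ^ 2 + g 1 1 ^ 2) := by
  rw [← coe_re, coe_specialLinearGroup_apply]
  simp only [Algebra.algebraMap_self, Real.ringHom_apply, coe_I, Complex.div_re, Complex.add_re,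
    Complex.mul_re, Complex.ofReal_re, Complex.I_re, mul_zero, Complex.ofReal_im, Complex.I_im,
    mul_one, sub_self, zero_add, Complex.normSq_apply, Complex.add_im, Complex.mul_im, add_zero]
  ring

lemma UpperHalfPlane.im_SL_smul_I (g : SL(2, ℝ)) :
    (g • I).im = 1 / (g 1 0 ^ 2 + g 1 1 ^ 2) := by
  have hdet := g.det_coe
  rw [det_fin_two] at hdet
  rw [← coe_im, coe_specialLinearGroup_apply]
  simp only [Algebra.algebraMap_self, Real.ringHom_apply, coe_I, Complex.div_im, Complex.add_im,
    Complex.mul_im, Complex.ofReal_re, Complex.I_im, mul_one, Complex.ofReal_im, Complex.I_re,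
    mul_zero, add_zero, Complex.add_re, Complex.mul_re, sub_self, zero_add, Complex.normSq_apply,
    one_div]
  rw [← sub_div, hdet]
  ring

lemma UpperHalfPlane.two_mul_cosh_dist_SL_smul_I (g : SL(2, ℝ)) :
    2 * Real.cosh (dist (g • I) I) = g 0 0 ^ 2 + g 0 1 ^ 2 + g 1 0 ^ 2 + g 1 1 ^ 2 := by
  have hdet := g.det_coe
  rw [det_fin_two] at hdet
  have hn : 0 < g 1 0 ^ 2 + g 1 1 ^ 2 := by simpa [im_SL_smul_I] using (g • I).im_pos
  rw [cosh_dist', re_SL_smul_I, im_SL_smul_I, I_re, I_im]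
  field_simp
  linear_combination (-(g 0 0 * g 1 1 - g 0 1 * g 1 0 + 1)) * hdet

/-- For every `A ∈ SL(2,ℝ)`, the operator norm of `A` equals `e^{d(A·i, i)/2}`,
where `A` acts on the upper half-plane by Möbius transformations and `d` is the
hyperbolic distance (curvature −1). -/
theorem norm_eq_exp_half_dist (A : Matrix.SpecialLinearGroup (Fin 2) ℝ) :
    opNorm (A : Matrix (Fin 2) (Fin 2) ℝ)
      = Real.exp (dist (A • UpperHalfPlane.I) UpperHalfPlane.I / 2) := by
  rw [Real.exp_half]
  refine opNorm_eq_sqrt_of_det_eq_one _ A.det_coe (Real.one_le_exp dist_nonneg) ?_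
  rw [← Real.exp_neg, ← two_mul_cosh_dist_SL_smul_I, Real.cosh_eq]
  ring
end

section
/- There exists a continuous map Φ : 𝔻 × 𝔻 → SL(2,ℝ) such that for all p₁, p₂ in the Poincaré disk 𝔻, Φ(p₁,p₂) · p₁ = p₂ and ‖Φ(p₁,p₂) − Id‖ ≤ e^{d(p₁,p₂)/2} − 1, where d is the hyperbolic distance on 𝔻. -/
/-!
The symmetric real matrices `N` with `N • z = w`, read as a linear condition on the entries of
`N`, form a line; normalising them to determinant one gives a positive definite
`Φ(z, w) ∈ SL(2, ℝ)`, continuous in `(z, w)`. Its eigenvalues are `λ, λ⁻¹` with `λ ≥ 1`, so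
`‖Φ - 1‖ = λ - 1`, and `λ + λ⁻¹ = tr Φ` is `2 cosh (ℓ / 2)` for the translation length `ℓ` of `Φ`,
which is at most `d(z, Φ • z) = d(z, w)`. Hence `λ ≤ e^{d(z,w)/2}`. Concretely, the last
inequality is `(tr N)² ≤ 4 cosh² (d/2) · det N`, which becomes a sum-of-squares identity once
`cosh d` is written in coordinates.
-/

open Real

lemma quadForm_nonneg_of_sq_le {α β γ : ℝ} (hα : 0 ≤ α) (hγ : 0 ≤ γ) (hdisc : β ^ 2 ≤ α * γ)
    (p q : ℝ) : 0 ≤ α * p ^ 2 + 2 * β * p * q + γ * q ^ 2 := by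
  rcases hα.eq_or_lt with rfl | hα
  · obtain rfl : β = 0 := by nlinarith [sq_nonneg β]
    nlinarith [sq_nonneg q]
  · refine nonneg_of_mul_nonneg_right ?_ hα
    nlinarith [sq_nonneg (α * p + β * q), mul_nonneg (sub_nonneg.2 hdisc) (sq_nonneg q)]

lemma quadForm_le_of_add_le {a b c L : ℝ} (hdet : a * c - b ^ 2 = 1) (hL : 1 ≤ L)
    (htr : a + c ≤ L + L⁻¹) (p q : ℝ) :
    a * p ^ 2 + 2 * b * p * q + c * q ^ 2 ≤ L * (p ^ 2 + q ^ 2) := by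
  have hL0 : 0 < L := by linarith
  have htrL : (a + c) * L ≤ L ^ 2 + 1 := by
    calc (a + c) * L ≤ (L + L⁻¹) * L := by gcongr
      _ = L ^ 2 + 1 := by field_simp
  -- `L • 1 - A` is positive semidefinite: its determinant is `L² - (a + c) L + 1 ≥ 0`.
  have hdisc : (-b) ^ 2 ≤ (L - a) * (L - c) := by nlinarith
  have hsum : 0 ≤ (L - a) + (L - c) := by nlinarith
  have haL : 0 ≤ L - a := by nlinarith [sq_nonneg b]
  have hcL : 0 ≤ L - c := by nlinarith [sq_nonneg b]
  nlinarith [quadForm_nonneg_of_sq_le haL hcL hdisc p q]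

lemma sq_add_sq_le_of_add_le {a b c L : ℝ} (ha : 0 < a) (hdet : a * c - b ^ 2 = 1)
    (hL : 1 ≤ L) (htr : a + c ≤ L + L⁻¹) (p q : ℝ) :
    ((a - 1) * p + b * q) ^ 2 + (b * p + (c - 1) * q) ^ 2 ≤ (L - 1) ^ 2 * (p ^ 2 + q ^ 2) := by
  have hL0 : 0 < L := by linarith
  have hQ := quadForm_le_of_add_le hdet hL htr p q
  have hQ0 : 0 ≤ a * p ^ 2 + 2 * b * p * q + c * q ^ 2 := by
    nlinarith [sq_nonneg (a * p + b * q), sq_nonneg q]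
  have hc : 0 < c := by nlinarith [sq_nonneg b]
  have htr2 : 2 ≤ a + c := by nlinarith [sq_nonneg (a - c), sq_nonneg b]
  calc ((a - 1) * p + b * q) ^ 2 + (b * p + (c - 1) * q) ^ 2
      = (a + c - 2) * (a * p ^ 2 + 2 * b * p * q + c * q ^ 2) := by
        -- Cayley–Hamilton: `(A - 1)ᵀ (A - 1) = (A - 1)² = (tr A - 2) A` when `det A = 1`.
        linear_combination (-(p ^ 2 + q ^ 2)) * hdet
    _ ≤ (L + L⁻¹ - 2) * (L * (p ^ 2 + q ^ 2)) := by gcongr; linarith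
    _ = (L - 1) ^ 2 * (p ^ 2 + q ^ 2) := by field_simp; ring

lemma opNorm_sub_one_le_of_trace_le {A : Matrix (Fin 2) (Fin 2) ℝ} (hA : A.IsSymm)
    (hdet : A.det = 1) (hpos : 0 < A 0 0) {s : ℝ} (hs : 0 ≤ s)
    (htr : A.trace ≤ 2 * cosh s) : opNorm (A - 1) ≤ exp s - 1 := by
  have hL : 1 ≤ exp s := one_le_exp hs
  have h10 : A 1 0 = A 0 1 := hA.apply 0 1
  rw [Matrix.det_fin_two, h10, ← sq] at hdet
  rw [Matrix.trace_fin_two, cosh_eq, exp_neg] at htr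
  refine ContinuousLinearMap.opNorm_le_bound _ (by linarith) fun ξ => ?_
  rw [EuclideanSpace.norm_eq, EuclideanSpace.norm_eq]
  simp only [Matrix.one_fin_two, map_sub, sub_apply, PiLp.sub_apply,
    Matrix.ofLp_toEuclideanCLM, Matrix.mulVec, dotProduct, Fin.sum_univ_two, Matrix.of_apply,
    Matrix.cons_val', Matrix.cons_val_fin_one, Matrix.cons_val_zero, Matrix.cons_val_one,
    norm_eq_abs, sq_abs, one_mul, zero_mul, add_zero, zero_add, h10]
  have key := sq_add_sq_le_of_add_le hpos hdet hL (by linarith) (ξ 0) (ξ 1)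
  rw [← sqrt_sq (by linarith : 0 ≤ exp s - 1), ← sqrt_mul (sq_nonneg _)]
  exact sqrt_le_sqrt (by linarith)

lemma Matrix.det_inv_sqrt_det_smul {A : Matrix (Fin 2) (Fin 2) ℝ} (hA : 0 < A.det) :
    ((√A.det)⁻¹ • A).det = 1 := by
  rw [Matrix.det_smul, Fintype.card_fin, inv_pow, sq_sqrt hA.le, inv_mul_cancel₀ hA.ne']

namespace UpperHalfPlane

open scoped MatrixGroups

lemma four_mul_cosh_half_dist_sq (z w : ℍ) :
    4 * cosh (dist z w / 2) ^ 2 = ((z.re - w.re) ^ 2 + (z.im + w.im) ^ 2) / (z.im * w.im) := by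
  have hzw : 0 < z.im * w.im := mul_pos z.im_pos w.im_pos
  have hcosh : cosh (dist z w) = 2 * cosh (dist z w / 2) ^ 2 - 1 := by
    have h := cosh_two_mul (dist z w / 2)
    rw [mul_div_cancel₀ _ two_ne_zero, sinh_sq] at h
    linarith
  rw [eq_div_iff hzw.ne']
  calc 4 * cosh (dist z w / 2) ^ 2 * (z.im * w.im)
        = 2 * (cosh (dist z w) + 1) * (z.im * w.im) := by rw [hcosh]; ring
    _ = _ := by rw [cosh_dist']; field_simp; ring

lemma smul_eq_of_num_eq {g : SL(2, ℝ)} {z w : ℍ}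
    (h : (g 0 0 : ℂ) * z + g 0 1 = w * ((g 1 0 : ℂ) * z + g 1 1)) : g • z = w := by
  ext1
  rw [coe_specialLinearGroup_apply]
  simp only [Algebra.algebraMap_self_apply]
  exact (div_eq_iff (denom_ne_zero (g : GL (Fin 2) ℝ) z)).2 h

/-- The two real conditions `N • z = w` on a symmetric `N = !![a, b; b, c]` are linear in
`(a, b, c)`; up to sign this is their cross product. -/
def adjustmentMatrix (z w : ℍ) : Matrix (Fin 2) (Fin 2) ℝ :=
  !![w.im + z.im * (w.re ^ 2 + w.im ^ 2), z.im * w.re - w.im * z.re;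
     z.im * w.re - w.im * z.re, w.im * (z.re ^ 2 + z.im ^ 2) + z.im]

lemma adjustmentMatrix_isSymm (z w : ℍ) : (adjustmentMatrix z w).IsSymm := by
  ext i j
  fin_cases i <;> fin_cases j <;> rfl

lemma det_adjustmentMatrix (z w : ℍ) :
    (adjustmentMatrix z w).det = z.im * w.im * (2 * z.im * w.im + (1 + z.re * w.re) ^ 2
      + (z.re * w.im) ^ 2 + (z.im * w.re) ^ 2 + (z.im * w.im) ^ 2) := by
  rw [adjustmentMatrix, Matrix.det_fin_two_of]
  ring

lemma det_adjustmentMatrix_pos (z w : ℍ) : 0 < (adjustmentMatrix z w).det := by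
  have := z.im_pos
  have := w.im_pos
  rw [det_adjustmentMatrix]
  positivity

lemma adjustmentMatrix_num_eq (z w : ℍ) :
    (adjustmentMatrix z w 0 0 : ℂ) * z + adjustmentMatrix z w 0 1
      = w * ((adjustmentMatrix z w 1 0 : ℂ) * z + adjustmentMatrix z w 1 1) := by
  apply Complex.ext <;>
  simp only [adjustmentMatrix, sq, Matrix.of_apply, Matrix.cons_val', Matrix.cons_val_zero,
    Matrix.cons_val_fin_one, Matrix.cons_val_one, Complex.ofReal_add, Complex.ofReal_mul,
    Complex.ofReal_sub, Complex.add_re, Complex.add_im, Complex.sub_re, Complex.sub_im,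
    Complex.mul_re, Complex.mul_im, Complex.ofReal_re, Complex.ofReal_im, coe_re, coe_im,
    mul_zero, zero_mul, sub_zero, add_zero, sub_self] <;>
  ring

lemma continuous_adjustmentMatrix :
    Continuous fun p : ℍ × ℍ => adjustmentMatrix p.1 p.2 := by
  unfold adjustmentMatrix
  fun_prop

lemma trace_adjustmentMatrix_sq_le (z w : ℍ) :
    (adjustmentMatrix z w).trace ^ 2
      ≤ 4 * cosh (dist z w / 2) ^ 2 * (adjustmentMatrix z w).det := by
  have hzw : 0 < z.im * w.im := mul_pos z.im_pos w.im_pos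
  rw [four_mul_cosh_half_dist_sq, det_adjustmentMatrix, Matrix.trace_fin_two]
  simp only [adjustmentMatrix, Matrix.of_apply, Matrix.cons_val', Matrix.cons_val_zero,
    Matrix.cons_val_fin_one, Matrix.cons_val_one]
  set x := z.re
  set y := z.im
  set u := w.re
  set v := w.im
  calc (v + y * (u ^ 2 + v ^ 2) + (v * (x ^ 2 + y ^ 2) + y)) ^ 2
      ≤ (v + y * (u ^ 2 + v ^ 2) + (v * (x ^ 2 + y ^ 2) + y)) ^ 2
        + (u * (1 - y ^ 2) - x * (1 - v ^ 2) + x * u * (u - x)) ^ 2 :=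
        le_add_of_nonneg_right (sq_nonneg _)
    _ = ((x - u) ^ 2 + (y + v) ^ 2) * (2 * y * v + (1 + x * u) ^ 2
          + (x * v) ^ 2 + (y * u) ^ 2 + (y * v) ^ 2) := by ring
    _ = _ := by rw [← mul_assoc, div_mul_cancel₀ _ hzw.ne']

noncomputable def adjustment (z w : ℍ) : SL(2, ℝ) :=
  ⟨(√(adjustmentMatrix z w).det)⁻¹ • adjustmentMatrix z w,
    Matrix.det_inv_sqrt_det_smul (det_adjustmentMatrix_pos z w)⟩

lemma coe_adjustment (z w : ℍ) :
    (adjustment z w : Matrix (Fin 2) (Fin 2) ℝ)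
      = (√(adjustmentMatrix z w).det)⁻¹ • adjustmentMatrix z w := rfl

lemma continuous_adjustment :
    Continuous fun p : ℍ × ℍ => (adjustment p.1 p.2 : Matrix (Fin 2) (Fin 2) ℝ) := by
  simp only [coe_adjustment]
  refine .smul (continuous_adjustmentMatrix.matrix_det.sqrt.inv₀ fun p => ?_)
    continuous_adjustmentMatrix
  exact (sqrt_pos.2 (det_adjustmentMatrix_pos p.1 p.2)).ne'

lemma adjustment_smul (z w : ℍ) : adjustment z w • z = w := by
  apply smul_eq_of_num_eq
  simp only [coe_adjustment, Matrix.smul_apply, smul_eq_mul, Complex.ofReal_mul]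
  linear_combination (((√(adjustmentMatrix z w).det)⁻¹ : ℝ) : ℂ) * adjustmentMatrix_num_eq z w

lemma trace_adjustment_le (z w : ℍ) :
    (adjustment z w : Matrix (Fin 2) (Fin 2) ℝ).trace ≤ 2 * cosh (dist z w / 2) := by
  have hdet := det_adjustmentMatrix_pos z w
  rw [coe_adjustment, Matrix.trace_smul, smul_eq_mul, inv_mul_le_iff₀ (sqrt_pos.2 hdet)]
  refine le_of_pow_le_pow_left₀ two_ne_zero (by positivity) ?_
  rw [mul_pow, sq_sqrt hdet.le]
  linarith [trace_adjustmentMatrix_sq_le z w]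

lemma adjustment_apply_zero_zero_pos (z w : ℍ) :
    0 < (adjustment z w : Matrix (Fin 2) (Fin 2) ℝ) 0 0 := by
  have := z.im_pos
  have := w.im_pos
  have := det_adjustmentMatrix_pos z w
  simp only [coe_adjustment, Matrix.smul_apply, smul_eq_mul, adjustmentMatrix, Matrix.of_apply,
    Matrix.cons_val', Matrix.cons_val_zero, Matrix.cons_val_fin_one]
  positivity

end UpperHalfPlane

/-- Disk adjustment lemma (stated in the upper half-plane model, which is isometric
to the Poincaré disk via the Cayley transform): there is a continuous map
`Φ : ℍ × ℍ → SL(2,ℝ)` with `Φ(p₁,p₂)·p₁ = p₂` and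
`‖Φ(p₁,p₂) − Id‖ ≤ e^{d(p₁,p₂)/2} − 1`. -/
theorem exists_adjustment_map :
    ∃ Φ : UpperHalfPlane × UpperHalfPlane → Matrix.SpecialLinearGroup (Fin 2) ℝ,
      Continuous (fun p => (Φ p : Matrix (Fin 2) (Fin 2) ℝ)) ∧
      (∀ p₁ p₂ : UpperHalfPlane, Φ (p₁, p₂) • p₁ = p₂) ∧
      (∀ p₁ p₂ : UpperHalfPlane,
        opNorm ((Φ (p₁, p₂) : Matrix (Fin 2) (Fin 2) ℝ) - 1)
          ≤ Real.exp (dist p₁ p₂ / 2) - 1) := by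
  refine ⟨fun p => UpperHalfPlane.adjustment p.1 p.2, UpperHalfPlane.continuous_adjustment,
    UpperHalfPlane.adjustment_smul, fun z w => ?_⟩
  exact opNorm_sub_one_le_of_trace_le ((UpperHalfPlane.adjustmentMatrix_isSymm z w).smul _)
    (UpperHalfPlane.adjustment z w).det_coe (UpperHalfPlane.adjustment_apply_zero_zero_pos z w)
    (by positivity) (UpperHalfPlane.trace_adjustment_le z w)
end

section
/- In the hyperbolic plane, the summit of a Saccheri quadrilateral is strictly longer than its base: if p₁q₁q₂p₂ is a quadrilateral with right angles at q₁ and q₂, equal leg lengths d(p₁,q₁) = d(p₂,q₂) > 0, then d(p₁,p₂) > d(q₁,q₂). -/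
open UpperHalfPlane

/-!
Move the feet `q₁, q₂` to the imaginary axis by an isometry. The base line is then the whole
axis: the Gram determinant of three points shows that an isometric copy of `ℝ` through two points
of the axis stays on it. The point of the axis nearest to `p` is at height `|p|`, whence
`im q = cosh (dist p q) * im p`. With equal legs the feet are therefore a common rescaling of
`p₁, p₂` by `c = cosh (dist p₁ q₁)`, and `cosh_dist'` gives
`cosh (dist p₁ p₂) = cosh (dist q₁ q₂) + (re p₁ - re p₂)² / (2 im p₁ im p₂)`; the last term is
positive because `|re pᵢ| = √(c² - 1) im pᵢ` and `im p₁ ≠ im p₂`.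
-/

open Real

/-- Vanishing of the Gram determinant of three points on a hyperbolic line. -/
lemma Real.cosh_gram_eq_zero (a b : ℝ) :
    1 + 2 * cosh a * cosh b * cosh (a - b) - cosh a ^ 2 - cosh b ^ 2 - cosh (a - b) ^ 2 = 0 := by
  rw [cosh_sub]
  linear_combination (cosh b ^ 2 - 1) * cosh_sq_sub_sinh_sq a + sinh a ^ 2 * cosh_sq_sub_sinh_sq b

theorem Isometry.surjective_of_real {f : ℝ → ℝ} (hf : Isometry f) : Function.Surjective f := by
  have h (a b : ℝ) : (f a - f b) ^ 2 = (a - b) ^ 2 := by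
    rw [← sq_abs, ← Real.dist_eq, hf.dist_eq, Real.dist_eq, sq_abs]
  have affine (u : ℝ) : f u = f 0 + (f 1 - f 0) * u := by
    linear_combination (-(f u - f 0)) * h 1 0 + (f 1 - f 0) / 2 * (h u 0 + h 1 0 - h u 1)
  intro v
  refine ⟨(f 1 - f 0) * (v - f 0), ?_⟩
  linear_combination affine ((f 1 - f 0) * (v - f 0)) + (v - f 0) * h 1 0

namespace UpperHalfPlane

lemma isometry_modular_S_smul : Isometry (ModularGroup.S • · : ℍ → ℍ) :=
  isometry_smul ℍ (Matrix.SpecialLinearGroup.map (Int.castRingHom ℝ) ModularGroup.S)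

lemma re_modular_S_smul (z : ℍ) : (ModularGroup.S • z).re = -z.re / Complex.normSq z := by
  rw [modular_S_smul]
  simp [neg_div]

lemma re_modular_S_smul_of_normSq_eq {z : ℍ} {r : ℝ} (h : Complex.normSq z = 2 * r * z.re) :
    (ModularGroup.S • z).re = -1 / (2 * r) := by
  have : 2 * r * z.re ≠ 0 := h ▸ (Complex.normSq_pos.mpr z.ne_zero).ne'
  rw [re_modular_S_smul, h]
  field_simp [left_ne_zero_of_mul (left_ne_zero_of_mul this), right_ne_zero_of_mul this]

lemma exists_isometry_re_eq_zero (z w : ℍ) :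
    ∃ Φ : ℍ → ℍ, Isometry Φ ∧ (Φ z).re = 0 ∧ (Φ w).re = 0 := by
  by_cases h : z.re = w.re
  · exact ⟨(-z.re +ᵥ ·), isometry_real_vadd _, by simp, by simp [h]⟩
  -- `z` and `w` lie on the semicircle with centre `m` and radius `r`; a translation puts its
  -- centre at `r`, and `S` then maps it onto a vertical line.
  set m := (z.re ^ 2 + z.im ^ 2 - w.re ^ 2 - w.im ^ 2) / (2 * (z.re - w.re)) with hm
  set r := √((z.re - m) ^ 2 + z.im ^ 2)
  have hz : (z.re - m) ^ 2 + z.im ^ 2 = r ^ 2 := (sq_sqrt (by positivity)).symm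
  have hw : (w.re - m) ^ 2 + w.im ^ 2 = r ^ 2 := by
    rw [← hz, hm]
    field_simp [sub_ne_zero.mpr h]
    ring
  have hS {ζ : ℍ} (hζ : (ζ.re - m) ^ 2 + ζ.im ^ 2 = r ^ 2) :
      (ModularGroup.S • ((r - m) +ᵥ ζ)).re = -1 / (2 * r) := by
    apply re_modular_S_smul_of_normSq_eq
    rw [Complex.normSq_apply, coe_re, coe_im, vadd_re, vadd_im]
    linear_combination hζ
  refine ⟨fun ζ => (1 / (2 * r)) +ᵥ ModularGroup.S • ((r - m) +ᵥ ζ),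
    (isometry_real_vadd _).comp (isometry_modular_S_smul.comp (isometry_real_vadd _)), ?_, ?_⟩
  · simp only [vadd_re, hS hz]; ring
  · simp only [vadd_re, hS hw]; ring

/-- The left side is the Gram determinant of the three points in the hyperboloid model. -/
lemma cosh_dist_gram_of_re_eq_zero (z p q : ℍ) (hp : p.re = 0) (hq : q.re = 0) :
    1 + 2 * cosh (dist z p) * cosh (dist z q) * cosh (dist p q)
      - cosh (dist z p) ^ 2 - cosh (dist z q) ^ 2 - cosh (dist p q) ^ 2 =
      (z.re * (p.im ^ 2 - q.im ^ 2) / (2 * z.im * p.im * q.im)) ^ 2 := by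
  have := z.im_pos; have := p.im_pos; have := q.im_pos
  simp only [cosh_dist', hp, hq]
  field_simp
  ring

lemma re_eq_zero_of_isometry {c : ℝ → ℍ} (hc : Isometry c) {s t : ℝ} (hst : s ≠ t)
    (hs : (c s).re = 0) (ht : (c t).re = 0) (u : ℝ) : (c u).re = 0 := by
  have hcosh (a b : ℝ) : cosh (dist (c a) (c b)) = cosh (a - b) := by
    rw [hc.dist_eq, Real.dist_eq, cosh_abs]
  have hgram := cosh_dist_gram_of_re_eq_zero (c u) (c s) (c t) hs ht
  rw [hcosh, hcosh, hcosh, ← cosh_neg (s - t), show -(s - t) = u - s - (u - t) by ring,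
    cosh_gram_eq_zero] at hgram
  have him : (c s).im ^ 2 - (c t).im ^ 2 ≠ 0 := by
    rw [sub_ne_zero, Ne, pow_left_inj₀ (c s).im_pos.le (c t).im_pos.le two_ne_zero]
    exact fun h => hst (hc.injective (ext_re_im (hs.trans ht.symm) h))
  simpa [him, (c u).im_pos.ne', (c s).im_pos.ne', (c t).im_pos.ne'] using hgram.symm

lemma mem_range_of_re_eq_zero {c : ℝ → ℍ} (hc : Isometry c) (hre : ∀ u, (c u).re = 0)
    {z : ℍ} (hz : z.re = 0) : z ∈ Set.range c := by
  have hlog : Isometry fun u => log (c u).im :=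
    Isometry.of_dist_eq fun a b => by rw [← dist_of_re_eq ((hre a).trans (hre b).symm), hc.dist_eq]
  obtain ⟨u, hu⟩ := hlog.surjective_of_real (log z.im)
  exact ⟨u, ext_re_im ((hre u).trans hz.symm) (log_injOn_pos (c u).im_pos z.im_pos hu)⟩

lemma sq_im_eq_of_forall_dist_le {p q : ℍ} (hq : q.re = 0)
    (hfoot : ∀ z : ℍ, z.re = 0 → dist p q ≤ dist p z) :
    q.im ^ 2 = p.re ^ 2 + p.im ^ 2 := by
  set S := √(p.re ^ 2 + p.im ^ 2)
  have hy := p.im_pos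
  have hS : 0 < S := sqrt_pos.mpr (by positivity)
  have hS2 : S ^ 2 = p.re ^ 2 + p.im ^ 2 := sq_sqrt (by positivity)
  set z : ℍ := ⟨⟨0, S⟩, hS⟩
  have hle := (cosh_strictMonoOn.le_iff_le dist_nonneg dist_nonneg).mpr (hfoot z rfl)
  rw [cosh_dist', cosh_dist', hq, show z.re = 0 from rfl, show z.im = S from rfl, sub_zero, ← hS2,
    div_le_div_iff₀ (by have := q.im_pos; positivity) (by positivity)] at hle
  have h0 : 2 * p.im * S * (S - q.im) ^ 2 ≤ 0 := by linear_combination hle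
  have hSq : S = q.im :=
    sub_eq_zero.mp ((sq_nonpos_iff _).mp (nonpos_of_mul_nonpos_right h0 (by positivity)))
  rw [← hS2, hSq]

lemma im_eq_cosh_dist_mul_im {p q : ℍ} (hq : q.re = 0) (h : q.im ^ 2 = p.re ^ 2 + p.im ^ 2) :
    q.im = cosh (dist p q) * p.im := by
  have := p.im_pos; have := q.im_pos
  rw [cosh_dist', hq]
  field_simp
  linear_combination h

lemma cosh_dist_eq_cosh_dist_add {p₁ p₂ q₁ q₂ : ℍ} (hq₁ : q₁.re = 0) (hq₂ : q₂.re = 0) {c : ℝ}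
    (h₁ : q₁.im = c * p₁.im) (h₂ : q₂.im = c * p₂.im) :
    cosh (dist p₁ p₂) = cosh (dist q₁ q₂) + (p₁.re - p₂.re) ^ 2 / (2 * p₁.im * p₂.im) := by
  have := p₁.im_pos; have := p₂.im_pos
  have hc : c ≠ 0 := by rintro rfl; exact q₁.im_pos.ne' (by simpa using h₁)
  rw [cosh_dist', cosh_dist', hq₁, hq₂, h₁, h₂]
  field_simp
  ring

lemma dist_lt_dist_of_re_eq_zero {p₁ q₁ q₂ p₂ : ℍ} (hq₁ : q₁.re = 0) (hq₂ : q₂.re = 0)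
    (hq : q₁ ≠ q₂) (hfoot₁ : ∀ z : ℍ, z.re = 0 → dist p₁ q₁ ≤ dist p₁ z)
    (hfoot₂ : ∀ z : ℍ, z.re = 0 → dist p₂ q₂ ≤ dist p₂ z)
    (hleg : dist p₁ q₁ = dist p₂ q₂) (hpos : 0 < dist p₁ q₁) :
    dist q₁ q₂ < dist p₁ p₂ := by
  have h₁ := sq_im_eq_of_forall_dist_le hq₁ hfoot₁
  have h₂ := sq_im_eq_of_forall_dist_le hq₂ hfoot₂
  have e₁ := im_eq_cosh_dist_mul_im hq₁ h₁
  have e₂ : q₂.im = cosh (dist p₁ q₁) * p₂.im := hleg ▸ im_eq_cosh_dist_mul_im hq₂ h₂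
  set c := cosh (dist p₁ q₁)
  have hc : 1 < c := one_lt_cosh.mpr hpos.ne'
  have hre : p₁.re ≠ p₂.re := by
    intro hre
    have hsq : (c ^ 2 - 1) * (p₁.im ^ 2 - p₂.im ^ 2) = 0 := by
      linear_combination h₁ - (q₁.im + c * p₁.im) * e₁ - h₂ + (q₂.im + c * p₂.im) * e₂
        + (p₁.re + p₂.re) * hre
    have him : p₁.im = p₂.im := by
      rw [← pow_left_inj₀ p₁.im_pos.le p₂.im_pos.le two_ne_zero, ← sub_eq_zero]
      exact (mul_eq_zero.mp hsq).resolve_left (by nlinarith)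
    exact hq (ext_re_im (hq₁.trans hq₂.symm) (by rw [e₁, e₂, him]))
  have := p₁.im_pos; have := p₂.im_pos
  rw [← cosh_strictMonoOn.lt_iff_lt dist_nonneg dist_nonneg,
    cosh_dist_eq_cosh_dist_add hq₁ hq₂ e₁ e₂]
  exact lt_add_of_pos_right _ (by have := sub_ne_zero.mpr hre; positivity)

end UpperHalfPlane

/-- The summit of a Saccheri quadrilateral in the hyperbolic plane (upper half-plane
model) is strictly longer than its base.  The base `q₁q₂` lies on a geodesic line
`γ` (an isometric embedding of `ℝ`), the legs have equal positive length, and the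
right angles at `q₁`, `q₂` are expressed by saying that `q₁` (resp. `q₂`) is the
point of the base line nearest to `p₁` (resp. `p₂`). -/
theorem saccheri_summit_gt_base
    (p₁ q₁ q₂ p₂ : UpperHalfPlane) (γ : ℝ → UpperHalfPlane) (hγ : Isometry γ)
    (s t : ℝ) (hs : γ s = q₁) (ht : γ t = q₂) (hst : s ≠ t)
    (hfoot₁ : ∀ u : ℝ, dist p₁ q₁ ≤ dist p₁ (γ u))
    (hfoot₂ : ∀ u : ℝ, dist p₂ q₂ ≤ dist p₂ (γ u))
    (hleg : dist p₁ q₁ = dist p₂ q₂) (hpos : 0 < dist p₁ q₁) :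
    dist q₁ q₂ < dist p₁ p₂ := by
  obtain ⟨Φ, hΦ, h₁, h₂⟩ := exists_isometry_re_eq_zero q₁ q₂
  have hline : ∀ u, (Φ (γ u)).re = 0 :=
    re_eq_zero_of_isometry (hΦ.comp hγ) hst (hs ▸ h₁) (ht ▸ h₂)
  have hfoot {p q : ℍ} (h : ∀ u, dist p q ≤ dist p (γ u)) (z : ℍ) (hz : z.re = 0) :
      dist (Φ p) (Φ q) ≤ dist (Φ p) z := by
    obtain ⟨u, rfl⟩ := mem_range_of_re_eq_zero (hΦ.comp hγ) hline hz
    simpa [hΦ.dist_eq] using h u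
  have hq : Φ q₁ ≠ Φ q₂ := hΦ.injective.ne (hs ▸ ht ▸ hγ.injective.ne hst)
  simpa only [hΦ.dist_eq] using dist_lt_dist_of_re_eq_zero h₁ h₂ hq (hfoot hfoot₁) (hfoot hfoot₂)
    (by simpa only [hΦ.dist_eq] using hleg) (by simpa only [hΦ.dist_eq] using hpos)
end

section
/- Let X be a compact metric space with at least 3 points, f : X → X minimal, and A : X → S continuous with tr A ≡ 0, where S is the set of Schrödinger matrices [[t,−1],[1,0]]. Given an open V ⊂ X with closure disjoint from f(V̄) and f²(V̄), and Ã ∈ C⁰(X,S) with tr Ã supported in V ∪ f²(V) and tr Ã(z) + tr Ã(f²(z)) = 0 for z ∈ V, define B(x) = Id for x ∉ f(V)∪f²(V), B(x) = Ã(f⁻¹(x)) R_{−π/2} for x ∈ f(V), and B(x) = R_{−π/2} Ã(f⁻²(x)) for x ∈ f²(V). Then B(f(x)) A(x) B(x)⁻¹ = Ã(x) for all x ∈ X. -/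
/-!
Write `J = R_{π/2}`, so that `A ≡ J`, `R_{-π/2} = J⁻¹ = -J` and `J² = -1`, and let `Ã(z) = S(t)`
for some `z ∈ V`. Along the orbit segment `z, f z, f² z`:
at `z`, `B(f z) J B(z)⁻¹ = S(t) J⁻¹ J = S(t)`;
at `f z`, `J⁻¹ S(t) J (S(t) J⁻¹)⁻¹ = J⁻¹ S(t) J² S(t)⁻¹ = -J⁻¹ = J = Ã(f z)`;
at `f² z`, `J (J⁻¹ S(t))⁻¹ = J S(t)⁻¹ J = S(-t) = Ã(f² z)` by the cancellation of traces.
At every other point `x`, `B(x) = B(f x) = 1` and `Ã(x) = J`.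
-/

/-- The rotation matrix by angle `θ`. -/
noncomputable def rotMat (θ : ℝ) : Matrix (Fin 2) (Fin 2) ℝ :=
  !![Real.cos θ, -Real.sin θ; Real.sin θ, Real.cos θ]

/-- Membership in the set `S` of Schrödinger matrices `[[t,−1],[1,0]]`. -/
def IsSchrodingerMat (M : Matrix (Fin 2) (Fin 2) ℝ) : Prop :=
  ∃ t : ℝ, M = !![t, -1; 1, 0]

open Real

def schrodingerMat (t : ℝ) : Matrix (Fin 2) (Fin 2) ℝ :=
  !![t, -1; 1, 0]

@[simp]
theorem trace_schrodingerMat (t : ℝ) : (schrodingerMat t).trace = t := by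
  simp [schrodingerMat, Matrix.trace_fin_two]

@[simp]
theorem det_schrodingerMat (t : ℝ) : (schrodingerMat t).det = 1 := by
  simp [schrodingerMat, Matrix.det_fin_two]

theorem schrodingerMat_zero : schrodingerMat 0 = rotMat (π / 2) := by
  simp [schrodingerMat, rotMat]

theorem IsSchrodingerMat.eq_schrodingerMat_trace {M : Matrix (Fin 2) (Fin 2) ℝ}
    (hM : IsSchrodingerMat M) : M = schrodingerMat M.trace := by
  obtain ⟨t, rfl⟩ := hM
  exact (congrArg schrodingerMat (trace_schrodingerMat t)).symm

theorem IsSchrodingerMat.det_eq_one {M : Matrix (Fin 2) (Fin 2) ℝ} (hM : IsSchrodingerMat M) :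
    M.det = 1 := by
  rw [hM.eq_schrodingerMat_trace, det_schrodingerMat]

theorem IsSchrodingerMat.eq_rotMat_of_trace_eq_zero {M : Matrix (Fin 2) (Fin 2) ℝ}
    (hM : IsSchrodingerMat M) (htr : M.trace = 0) : M = rotMat (π / 2) := by
  rw [hM.eq_schrodingerMat_trace, htr, schrodingerMat_zero]

theorem rotMat_add (a b : ℝ) : rotMat (a + b) = rotMat a * rotMat b := by
  ext i j
  fin_cases i <;> fin_cases j <;>
    simp [rotMat, Matrix.mul_apply, Fin.sum_univ_two, cos_add, sin_add] <;> ring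

theorem rotMat_zero : rotMat 0 = 1 := by
  simp [rotMat, Matrix.one_fin_two]

theorem rotMat_pi : rotMat π = -1 := by
  simp [rotMat, Matrix.one_fin_two]

theorem rotMat_neg_mul_rotMat (θ : ℝ) : rotMat (-θ) * rotMat θ = 1 := by
  rw [← rotMat_add, neg_add_cancel, rotMat_zero]

theorem inv_rotMat (θ : ℝ) : (rotMat θ)⁻¹ = rotMat (-θ) :=
  Matrix.inv_eq_left_inv (rotMat_neg_mul_rotMat θ)

theorem rotMat_neg_pi_div_two : rotMat (-(π / 2)) = -rotMat (π / 2) := by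
  simp [rotMat]

theorem rotMat_neg_pi_div_two_mul_mul_rotMat_pi_div_two_mul_inv {M : Matrix (Fin 2) (Fin 2) ℝ}
    (hM : IsUnit M.det) :
    rotMat (-(π / 2)) * M * rotMat (π / 2) * (M * rotMat (-(π / 2)))⁻¹ = rotMat (π / 2) := by
  have hJJ : rotMat (π / 2) * rotMat (π / 2) = -1 := by rw [← rotMat_add, add_halves, rotMat_pi]
  rw [Matrix.mul_inv_rev, inv_rotMat, neg_neg]
  calc rotMat (-(π / 2)) * M * rotMat (π / 2) * (rotMat (π / 2) * M⁻¹)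
      = -(rotMat (-(π / 2)) * (M * M⁻¹)) := by
        simp only [mul_assoc, ← mul_assoc (rotMat (π / 2)) (rotMat (π / 2)), hJJ]
        simp
    _ = rotMat (π / 2) := by rw [M.mul_nonsing_inv hM, mul_one, rotMat_neg_pi_div_two, neg_neg]

theorem rotMat_pi_div_two_mul_inv_rotMat_neg_pi_div_two_mul (t : ℝ) :
    rotMat (π / 2) * (rotMat (-(π / 2)) * schrodingerMat t)⁻¹ = schrodingerMat (-t) := by
  have hinv :
      (rotMat (-(π / 2)) * schrodingerMat t)⁻¹ = rotMat (-(π / 2)) * schrodingerMat (-t) :=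
    Matrix.inv_eq_left_inv (by
      ext i j
      fin_cases i <;> fin_cases j <;>
        simp [rotMat, schrodingerMat, Matrix.mul_apply, Fin.sum_univ_two])
  rw [hinv, ← mul_assoc, ← rotMat_add, add_neg_cancel, rotMat_zero, one_mul]

section Orbit

variable {X : Type*} {f : X → X} {V : Set X}

theorem Function.Injective.disjoint_image_union_image_comp (hf : f.Injective)
    (h1 : Disjoint V (f '' V)) : Disjoint (f '' V) (V ∪ (f ∘ f) '' V) := by
  rw [Set.image_comp]
  exact Set.disjoint_union_right.mpr ⟨h1.symm, (Set.disjoint_image_iff hf).mpr h1⟩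

theorem Function.Injective.disjoint_image_comp_comp_image_union (hf : f.Injective)
    (h1 : Disjoint V (f '' V)) (h2 : Disjoint V ((f ∘ f) '' V)) :
    Disjoint ((f ∘ f ∘ f) '' V) (f '' V ∪ (f ∘ f) '' V) := by
  simp only [Set.image_comp]
  refine Set.disjoint_union_right.mpr ⟨?_, ?_⟩
  · exact (Set.disjoint_image_iff hf).mpr (by rw [← Set.image_comp]; exact h2.symm)
  · exact (Set.disjoint_image_iff hf).mpr ((Set.disjoint_image_iff hf).mpr h1.symm)

theorem Function.Injective.apply_notMem_image_union (hf : f.Injective) {x : X}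
    (h0 : x ∉ V) (h1 : x ∉ f '' V) : f x ∉ f '' V ∪ (f ∘ f) '' V := by
  rw [Set.image_comp, ← Set.image_union, hf.mem_set_image]
  rintro (h | h)
  exacts [h0 h, h1 h]

end Orbit

open Real in
theorem trace_zero_conjugation_general
    {X : Type*} [MetricSpace X]
    (f : X ≃ₜ X)
    (A : X → Matrix (Fin 2) (Fin 2) ℝ)
    (hAS : ∀ x, IsSchrodingerMat (A x))
    (hAtr : ∀ x, (A x).trace = 0)
    (V : Set X)
    (hV1 : closure V ∩ (f '' closure V) = ∅)
    (hV2 : closure V ∩ ((f ∘ f) '' closure V) = ∅)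
    (Atil : X → Matrix (Fin 2) (Fin 2) ℝ)
    (hAtilS : ∀ x, IsSchrodingerMat (Atil x))
    (hsupp : ∀ x, x ∉ V ∪ ((f ∘ f) '' V) → (Atil x).trace = 0)
    (hcancel : ∀ z ∈ V, (Atil z).trace + (Atil (f (f z))).trace = 0)
    (B : X → Matrix (Fin 2) (Fin 2) ℝ)
    (hB0 : ∀ x, x ∉ (f '' V) ∪ ((f ∘ f) '' V) → B x = 1)
    (hB1 : ∀ x ∈ f '' V, B x = Atil (f.symm x) * rotMat (-(π / 2)))
    (hB2 : ∀ x ∈ (f ∘ f) '' V, B x = rotMat (-(π / 2)) * Atil (f.symm (f.symm x))) :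
    ∀ x : X, B (f x) * A x * (B x)⁻¹ = Atil x := by
  have hd1 : Disjoint V (f '' V) :=
    (Set.disjoint_iff_inter_eq_empty.mpr hV1).mono subset_closure (Set.image_mono subset_closure)
  have hd2 : Disjoint V ((f ∘ f) '' V) :=
    (Set.disjoint_iff_inter_eq_empty.mpr hV2).mono subset_closure (Set.image_mono subset_closure)
  have hA (y : X) : A y = rotMat (π / 2) := (hAS y).eq_rotMat_of_trace_eq_zero (hAtr y)
  have hAtil (y : X) (hy : y ∉ V ∪ (f ∘ f) '' V) : Atil y = rotMat (π / 2) :=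
    (hAtilS y).eq_rotMat_of_trace_eq_zero (hsupp y hy)
  intro x
  rw [hA]
  by_cases hxV : x ∈ V
  · have hBx : B x = 1 :=
      hB0 x (Set.disjoint_union_right.mpr ⟨hd1, hd2⟩ |>.notMem_of_mem_left hxV)
    rw [hBx, hB1 _ ⟨x, hxV, rfl⟩, f.symm_apply_apply, inv_one, mul_one, mul_assoc,
      rotMat_neg_mul_rotMat, mul_one]
  by_cases hx1 : x ∈ f '' V
  · obtain ⟨z, hz, rfl⟩ := hx1
    have hfz : f z ∉ V ∪ (f ∘ f) '' V :=
      f.injective.disjoint_image_union_image_comp hd1 |>.notMem_of_mem_left ⟨z, hz, rfl⟩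
    rw [hB1 _ ⟨z, hz, rfl⟩, hB2 (f (f z)) ⟨z, hz, rfl⟩, f.symm_apply_apply, f.symm_apply_apply,
      hAtil _ hfz, rotMat_neg_pi_div_two_mul_mul_rotMat_pi_div_two_mul_inv
        (by simp [(hAtilS z).det_eq_one])]
  by_cases hx2 : x ∈ (f ∘ f) '' V
  · obtain ⟨z, hz, rfl⟩ := hx2
    have hfffz : f (f (f z)) ∉ f '' V ∪ (f ∘ f) '' V :=
      f.injective.disjoint_image_comp_comp_image_union hd1 hd2 |>.notMem_of_mem_left ⟨z, hz, rfl⟩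
    have htr : (Atil (f (f z))).trace = -(Atil z).trace :=
      eq_neg_of_add_eq_zero_right (hcancel z hz)
    rw [Function.comp_apply, hB0 _ hfffz, hB2 (f (f z)) ⟨z, hz, rfl⟩, f.symm_apply_apply,
      f.symm_apply_apply, one_mul, (hAtilS z).eq_schrodingerMat_trace,
      rotMat_pi_div_two_mul_inv_rotMat_neg_pi_div_two_mul,
      (hAtilS (f (f z))).eq_schrodingerMat_trace, htr]
  rw [hB0 x (by rintro (h | h) <;> contradiction),
    hB0 _ (f.injective.apply_notMem_image_union hxV hx1),
    hAtil x (by rintro (h | h) <;> contradiction), inv_one, mul_one, one_mul]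

open Real in
/-- Projection step for vanishing trace: if `A : X → S` has identically zero trace
(`X` compact with ≥ 3 points, `f` minimal), `V` is open with closure disjoint from
its first two iterates, and `Ã : X → S` is continuous with `tr Ã` supported in
`V ∪ f²(V)` and `tr Ã(z) + tr Ã(f²z) = 0` on `V`, then the map `B` defined by
`B = Id` off `f(V) ∪ f²(V)`, `B(x) = Ã(f⁻¹x) R_{−π/2}` on `f(V)`, and
`B(x) = R_{−π/2} Ã(f⁻²x)` on `f²(V)` conjugates `(f,A)` to `(f,Ã)`. -/
theorem trace_zero_conjugation
    {X : Type*} [MetricSpace X] [CompactSpace X]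
    (hcard : ∃ x y z : X, x ≠ y ∧ y ≠ z ∧ x ≠ z)
    (f : X ≃ₜ X) (hmin : ∀ x : X, Dense (Set.range fun n : ℤ => if 0 ≤ n then (⇑f)^[n.toNat] x else (⇑f.symm)^[(-n).toNat] x))
    (A : X → Matrix (Fin 2) (Fin 2) ℝ)
    (hAS : ∀ x, IsSchrodingerMat (A x)) (hAcont : Continuous A)
    (hAtr : ∀ x, (A x).trace = 0)
    (V : Set X) (hV : IsOpen V)
    (hV1 : closure V ∩ (f '' closure V) = ∅)
    (hV2 : closure V ∩ ((f ∘ f) '' closure V) = ∅)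
    (Atil : X → Matrix (Fin 2) (Fin 2) ℝ)
    (hAtilS : ∀ x, IsSchrodingerMat (Atil x)) (hAtilcont : Continuous Atil)
    (hsupp : ∀ x, x ∉ V ∪ ((f ∘ f) '' V) → (Atil x).trace = 0)
    (hcancel : ∀ z ∈ V, (Atil z).trace + (Atil (f (f z))).trace = 0)
    (B : X → Matrix (Fin 2) (Fin 2) ℝ)
    (hB0 : ∀ x, x ∉ (f '' V) ∪ ((f ∘ f) '' V) → B x = 1)
    (hB1 : ∀ x ∈ f '' V, B x = Atil (f.symm x) * rotMat (-(π / 2)))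
    (hB2 : ∀ x ∈ (f ∘ f) '' V, B x = rotMat (-(π / 2)) * Atil (f.symm (f.symm x))) :
    ∀ x : X, B (f x) * A x * (B x)⁻¹ = Atil x :=
  trace_zero_conjugation_general f A hAS hAtr V hV1 hV2 Atil hAtilS hsupp hcancel B hB0 hB1 hB2
end

section
/- Let f : 𝕋² → 𝕋² be given by f(x,y) = (x+α, y+2x) with α irrational, and A(x,y) = R_{2πx}. Then for every continuous B : 𝕋² → SL(2,ℝ), the map C(x,y) = B(f(x,y)) A(x,y) B(x,y)⁻¹ is not homotopic to a constant map 𝕋² → SL(2,ℝ). -/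
open Real

/-!
Identify `ℝ²` with `ℂ`. A real `2 × 2` matrix `M` acts as `z ↦ p z + q z̄` with
`|p|² - |q|² = det M` and `p (M N) = p M * p N + q M * conj (q N)`. For loops in `GL⁺(2, ℝ)` the
second summand is pointwise smaller than the first, so the winding number of `p` is additive
under pointwise products. Along the loop `x ↦ (x, 0)`, the map `C` therefore winds
`(k + 2ℓ) + 1 - k = 2ℓ + 1` times, where `k` and `ℓ` are the winding numbers of `B` along the two
generators of the torus (the loop `x ↦ (x + α, 2x)` has class `(1, 2)`). A nullhomotopy would
force this odd integer to vanish. Winding numbers are read off continuous logarithms, which exist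
on `ℝ` and `ℝ²` because `exp : ℂ → ℂ \ {0}` is a covering map.
-/

open Complex ComplexConjugate Matrix

theorem Complex.exists_continuous_exp_eq {X : Type*} [TopologicalSpace X]
    [SimplyConnectedSpace X] [LocallyPathConnectedSpace X] {f : X → ℂ} (hf : Continuous f)
    (hf₀ : ∀ x, f x ≠ 0) : ∃ u : X → ℂ, Continuous u ∧ ∀ x, exp (u x) = f x := by
  obtain ⟨x₀⟩ : Nonempty X := inferInstance
  obtain ⟨u, ⟨-, hu⟩, -⟩ := isCoveringMapOn_exp.existsUnique_continuousMap_lifts ⟨f, hf⟩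
    (exp_log (hf₀ x₀)) hf₀
  exact ⟨u, u.continuous, congrFun hu⟩

theorem Complex.sub_eq_sub_of_exp_eq {X : Type*} [TopologicalSpace X] [PreconnectedSpace X]
    {u v : X → ℂ} (hu : Continuous u) (hv : Continuous v) (h : ∀ x, exp (u x) = exp (v x))
    (x y : X) : u x - v x = u y - v y :=
  isCoveringMap_exp.const_of_comp (hu.sub hv)
    (fun a b => Subtype.ext (by simp [Complex.exp_sub, h])) x y

open Classical in
/-- The change of a continuous branch of `log ∘ f` over `[0, 1]`, divided by `2πi`
(junk value `0` unless `f` is continuous and nonvanishing). -/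
noncomputable def winding (f : ℝ → ℂ) : ℂ :=
  if h : Continuous f ∧ ∀ x, f x ≠ 0 then
    let u := (exists_continuous_exp_eq h.1 h.2).choose
    (u 1 - u 0) / (2 * π * I)
  else 0

theorem winding_eq_of_exp_eq {f u : ℝ → ℂ} (hu : Continuous u) (hfu : ∀ x, exp (u x) = f x) :
    winding f = (u 1 - u 0) / (2 * π * I) := by
  have hf : Continuous f ∧ ∀ x, f x ≠ 0 := by
    refine ⟨?_, fun x => hfu x ▸ exp_ne_zero _⟩
    rw [show f = fun x => exp (u x) from funext fun x => (hfu x).symm]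
    fun_prop
  rw [winding, dif_pos hf]
  dsimp only
  obtain ⟨hv, hvf⟩ := (exists_continuous_exp_eq hf.1 hf.2).choose_spec
  have := sub_eq_sub_of_exp_eq hv hu (fun x => (hvf x).trans (hfu x).symm) 1 0
  congr 1
  linear_combination this

theorem winding_const {c : ℂ} (hc : c ≠ 0) : winding (fun _ => c) = 0 := by
  rw [winding_eq_of_exp_eq continuous_const (fun _ => exp_log hc), sub_self, zero_div]

theorem winding_exp_mul_I : winding (fun x => exp (2 * π * x * I)) = 1 := by
  rw [winding_eq_of_exp_eq (u := fun x : ℝ => 2 * π * x * I) (by fun_prop) fun _ => rfl]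
  have : (2 * π * I : ℂ) ≠ 0 := by simp [pi_ne_zero, I_ne_zero]
  field_simp
  push_cast
  ring

theorem winding_mul {f g : ℝ → ℂ} (hf : Continuous f) (hf₀ : ∀ x, f x ≠ 0)
    (hg : Continuous g) (hg₀ : ∀ x, g x ≠ 0) :
    winding (fun x => f x * g x) = winding f + winding g := by
  obtain ⟨u, hu, hfu⟩ := exists_continuous_exp_eq hf hf₀
  obtain ⟨v, hv, hgv⟩ := exists_continuous_exp_eq hg hg₀
  rw [winding_eq_of_exp_eq hu hfu, winding_eq_of_exp_eq hv hgv,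
    winding_eq_of_exp_eq (u := fun x => u x + v x) (hu.add hv) fun x => by
      rw [Complex.exp_add, hfu, hgv]]
  ring

theorem exists_winding_eq_intCast {f : ℝ → ℂ} (hf : Continuous f) (hf₀ : ∀ x, f x ≠ 0)
    (hloop : f 1 = f 0) : ∃ n : ℤ, winding f = n := by
  obtain ⟨u, hu, hfu⟩ := exists_continuous_exp_eq hf hf₀
  obtain ⟨n, hn⟩ : ∃ n : ℤ, u 1 - u 0 = n * (2 * π * I) := by
    rw [← Complex.exp_eq_one_iff, Complex.exp_sub, hfu, hfu, hloop, div_self (hf₀ 0)]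
  have : (2 * π * I : ℂ) ≠ 0 := by simp [pi_ne_zero, I_ne_zero]
  exact ⟨n, by rw [winding_eq_of_exp_eq hu hfu, hn, mul_div_cancel_right₀ _ this]⟩

theorem winding_one_add_eq_zero {h : ℝ → ℂ} (hh : Continuous h) (hloop : h 1 = h 0)
    (hlt : ∀ x, ‖h x‖ < 1) : winding (fun x => 1 + h x) = 0 := by
  have hslit : ∀ x, 1 + h x ∈ slitPlane := fun x => mem_slitPlane_of_norm_lt_one (hlt x)
  rw [winding_eq_of_exp_eq (u := fun x => log (1 + h x))
    (continuous_iff_continuousAt.2 fun x => (continuous_const.add hh).continuousAt.clog (hslit x))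
    fun x => exp_log (slitPlane_ne_zero (hslit x)), hloop, sub_self, zero_div]

theorem winding_add_eq_of_norm_lt {f g : ℝ → ℂ} (hf : Continuous f) (hg : Continuous g)
    (hf₁ : f 1 = f 0) (hg₁ : g 1 = g 0) (hlt : ∀ x, ‖g x‖ < ‖f x‖) :
    winding (fun x => f x + g x) = winding f := by
  have hf₀ : ∀ x, f x ≠ 0 := fun x => norm_pos_iff.1 ((norm_nonneg _).trans_lt (hlt x))
  have hquot : Continuous fun x => g x / f x := hg.div hf hf₀
  have hquot_lt : ∀ x, ‖g x / f x‖ < 1 := fun x => by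
    rw [norm_div, div_lt_one (norm_pos_iff.2 (hf₀ x))]
    exact hlt x
  calc winding (fun x => f x + g x) = winding (fun x => f x * (1 + g x / f x)) := by
        congr 1; funext x; field_simp [hf₀ x]
    _ = winding f + winding (fun x => 1 + g x / f x) :=
        winding_mul hf hf₀ (continuous_const.add hquot) fun x =>
          slitPlane_ne_zero (mem_slitPlane_of_norm_lt_one (hquot_lt x))
    _ = winding f := by
        rw [winding_one_add_eq_zero hquot (by rw [hf₁, hg₁]) hquot_lt, add_zero]

theorem winding_eq_of_homotopy {h : ℝ × ℝ → ℂ} (hh : Continuous h) (hh₀ : ∀ q, h q ≠ 0)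
    (hloop : ∀ t, h (t, 1) = h (t, 0)) (s t : ℝ) :
    winding (fun x => h (s, x)) = winding (fun x => h (t, x)) := by
  obtain ⟨u, hu, hhu⟩ := exists_continuous_exp_eq hh hh₀
  rw [winding_eq_of_exp_eq (by fun_prop) fun x => hhu (s, x),
    winding_eq_of_exp_eq (by fun_prop) fun x => hhu (t, x),
    sub_eq_sub_of_exp_eq (u := fun t => u (t, 1)) (v := fun t => u (t, 0)) (by fun_prop)
      (by fun_prop) (fun t => by simp only [hhu, hloop]) s t]

theorem winding_line_of_periodic {b : ℝ × ℝ → ℂ} (hb : Continuous b) (hb₀ : ∀ q, b q ≠ 0)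
    (hper₁ : ∀ x y, b (x + 1, y) = b (x, y)) (hper₂ : ∀ x y, b (x, y + 1) = b (x, y))
    (x₀ y₀ : ℝ) (m n : ℕ) :
    winding (fun s => b (x₀ + m * s, y₀ + n * s)) =
      m * winding (fun s => b (s, 0)) + n * winding (fun s => b (0, s)) := by
  obtain ⟨L, hL, hbL⟩ := exists_continuous_exp_eq hb hb₀
  have hL₁ : ∀ x y, L (x + 1, y) = L (x, y) + (L (1, 0) - L (0, 0)) := fun x y => by
    have := sub_eq_sub_of_exp_eq (u := fun q => L (q.1 + 1, q.2)) (by fun_prop) hL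
      (fun q => by simp only [hbL, hper₁]) (x, y) (0, 0)
    simp only [zero_add] at this
    linear_combination this
  have hL₂ : ∀ x y, L (x, y + 1) = L (x, y) + (L (0, 1) - L (0, 0)) := fun x y => by
    have := sub_eq_sub_of_exp_eq (u := fun q => L (q.1, q.2 + 1)) (by fun_prop) hL
      (fun q => by simp only [hbL, hper₂]) (x, y) (0, 0)
    simp only [zero_add] at this
    linear_combination this
  have hLm : ∀ (m : ℕ) x y, L (x + m, y) = L (x, y) + m * (L (1, 0) - L (0, 0)) := by
    intro m
    induction m with
    | zero => simp
    | succ k ih => intro x y; push_cast; rw [← add_assoc, hL₁, ih]; ring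
  have hLn : ∀ (n : ℕ) x y, L (x, y + n) = L (x, y) + n * (L (0, 1) - L (0, 0)) := by
    intro n
    induction n with
    | zero => simp
    | succ k ih => intro x y; push_cast; rw [← add_assoc, hL₂, ih]; ring
  rw [winding_eq_of_exp_eq (u := fun s => L (x₀ + m * s, y₀ + n * s)) (by fun_prop)
      fun s => hbL _,
    winding_eq_of_exp_eq (u := fun s => L (s, 0)) (by fun_prop) fun s => hbL _,
    winding_eq_of_exp_eq (u := fun s => L (0, s)) (by fun_prop) fun s => hbL _]
  simp only [mul_one, mul_zero, add_zero, hLm, hLn]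
  ring

namespace Matrix

/-- Identifying `ℝ²` with `ℂ`, the matrix `M` acts as
`z ↦ M.complexLinearPart * z + M.complexAntilinearPart * conj z`. -/
noncomputable def complexLinearPart (M : Matrix (Fin 2) (Fin 2) ℝ) : ℂ :=
  ((M 0 0 + M 1 1) / 2 : ℝ) + ((M 1 0 - M 0 1) / 2 : ℝ) * I

noncomputable def complexAntilinearPart (M : Matrix (Fin 2) (Fin 2) ℝ) : ℂ :=
  ((M 0 0 - M 1 1) / 2 : ℝ) + ((M 1 0 + M 0 1) / 2 : ℝ) * I

@[simp] theorem complexLinearPart_re (M : Matrix (Fin 2) (Fin 2) ℝ) :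
    M.complexLinearPart.re = (M 0 0 + M 1 1) / 2 := by
  simp [complexLinearPart]

@[simp] theorem complexLinearPart_im (M : Matrix (Fin 2) (Fin 2) ℝ) :
    M.complexLinearPart.im = (M 1 0 - M 0 1) / 2 := by
  simp [complexLinearPart]

@[simp] theorem complexAntilinearPart_re (M : Matrix (Fin 2) (Fin 2) ℝ) :
    M.complexAntilinearPart.re = (M 0 0 - M 1 1) / 2 := by
  simp [complexAntilinearPart]

@[simp] theorem complexAntilinearPart_im (M : Matrix (Fin 2) (Fin 2) ℝ) :
    M.complexAntilinearPart.im = (M 1 0 + M 0 1) / 2 := by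
  simp [complexAntilinearPart]

@[fun_prop] theorem continuous_complexLinearPart :
    Continuous (complexLinearPart : Matrix (Fin 2) (Fin 2) ℝ → ℂ) := by
  unfold complexLinearPart; fun_prop

@[fun_prop] theorem continuous_complexAntilinearPart :
    Continuous (complexAntilinearPart : Matrix (Fin 2) (Fin 2) ℝ → ℂ) := by
  unfold complexAntilinearPart; fun_prop

theorem complexLinearPart_mul (M N : Matrix (Fin 2) (Fin 2) ℝ) :
    (M * N).complexLinearPart = M.complexLinearPart * N.complexLinearPart +
      M.complexAntilinearPart * conj N.complexAntilinearPart := by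
  apply Complex.ext <;>
  simp only [Complex.add_re, Complex.add_im, Complex.mul_re, Complex.mul_im, conj_re, conj_im,
    complexLinearPart_re, complexLinearPart_im, complexAntilinearPart_re,
    complexAntilinearPart_im, mul_apply, Fin.sum_univ_two] <;> ring

theorem normSq_complexLinearPart_sub (M : Matrix (Fin 2) (Fin 2) ℝ) :
    normSq M.complexLinearPart - normSq M.complexAntilinearPart = M.det := by
  simp only [normSq_apply, complexLinearPart_re, complexLinearPart_im, complexAntilinearPart_re,
    complexAntilinearPart_im, det_fin_two]
  ring

theorem norm_complexAntilinearPart_lt {M : Matrix (Fin 2) (Fin 2) ℝ} (hM : 0 < M.det) :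
    ‖M.complexAntilinearPart‖ < ‖M.complexLinearPart‖ := by
  rw [← sq_lt_sq₀ (norm_nonneg _) (norm_nonneg _), ← normSq_eq_norm_sq, ← normSq_eq_norm_sq]
  linarith [normSq_complexLinearPart_sub M]

theorem complexLinearPart_ne_zero {M : Matrix (Fin 2) (Fin 2) ℝ} (hM : 0 < M.det) :
    M.complexLinearPart ≠ 0 :=
  norm_pos_iff.1 ((norm_nonneg _).trans_lt (norm_complexAntilinearPart_lt hM))

theorem complexLinearPart_one : (1 : Matrix (Fin 2) (Fin 2) ℝ).complexLinearPart = 1 := by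
  simp [complexLinearPart]

end Matrix

theorem Continuous.matrix_inv_of_det_ne_zero {X n 𝕜 : Type*} [TopologicalSpace X] [Fintype n]
    [DecidableEq n] [Field 𝕜] [TopologicalSpace 𝕜] [IsTopologicalRing 𝕜] [ContinuousInv₀ 𝕜]
    {P : X → Matrix n n 𝕜} (hP : Continuous P) (h : ∀ x, (P x).det ≠ 0) :
    Continuous fun x => (P x)⁻¹ := by
  simp only [Matrix.inv_def, Ring.inverse_eq_inv]
  exact (hP.matrix_det.inv₀ h).smul hP.matrix_adjugate

@[fun_prop] theorem continuous_rotMat : Continuous rotMat := by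
  refine continuous_matrix fun i j => ?_
  fin_cases i <;> fin_cases j <;> simp only [rotMat] <;> simp <;> fun_prop

theorem det_rotMat (θ : ℝ) : (rotMat θ).det = 1 := by
  simp [rotMat, det_fin_two, ← sq]

theorem complexLinearPart_rotMat (θ : ℝ) : (rotMat θ).complexLinearPart = exp (θ * I) := by
  rw [exp_mul_I, ← ofReal_cos, ← ofReal_sin]
  simp [complexLinearPart, rotMat]

theorem winding_complexLinearPart_mul {P Q : ℝ → Matrix (Fin 2) (Fin 2) ℝ}
    (hP : Continuous P) (hQ : Continuous Q) (hP₀ : ∀ x, 0 < (P x).det)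
    (hQ₀ : ∀ x, 0 < (Q x).det) (hP₁ : P 1 = P 0) (hQ₁ : Q 1 = Q 0) :
    winding (fun x => (P x * Q x).complexLinearPart) =
      winding (fun x => (P x).complexLinearPart) + winding (fun x => (Q x).complexLinearPart) := by
  simp only [complexLinearPart_mul]
  rw [winding_add_eq_of_norm_lt (by fun_prop) (by fun_prop) (by rw [hP₁, hQ₁]) (by rw [hP₁, hQ₁]),
    winding_mul (by fun_prop) (fun x => complexLinearPart_ne_zero (hP₀ x))
      (by fun_prop) (fun x => complexLinearPart_ne_zero (hQ₀ x))]
  intro x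
  rw [norm_mul, norm_mul, norm_conj]
  exact mul_lt_mul'' (norm_complexAntilinearPart_lt (hP₀ x))
    (norm_complexAntilinearPart_lt (hQ₀ x)) (norm_nonneg _) (norm_nonneg _)

theorem winding_complexLinearPart_inv {P : ℝ → Matrix (Fin 2) (Fin 2) ℝ} (hP : Continuous P)
    (hP₀ : ∀ x, 0 < (P x).det) (hP₁ : P 1 = P 0) :
    winding (fun x => (P x)⁻¹.complexLinearPart) =
      -winding (fun x => (P x).complexLinearPart) := by
  have h := winding_complexLinearPart_mul hP (hP.matrix_inv_of_det_ne_zero fun x => (hP₀ x).ne')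
    hP₀ (fun x => by rw [det_nonsing_inv, Ring.inverse_eq_inv]; exact inv_pos.2 (hP₀ x)) hP₁
    (congrArg Inv.inv hP₁)
  simp only [fun x => mul_nonsing_inv (P x) (hP₀ x).ne'.isUnit, complexLinearPart_one,
    winding_const one_ne_zero] at h
  linear_combination -h

theorem winding_cohomologous_cocycle {B : ℝ × ℝ → Matrix (Fin 2) (Fin 2) ℝ}
    (hB : Continuous B) (hB₀ : ∀ p, 0 < (B p).det)
    (hper₁ : ∀ x y, B (x + 1, y) = B (x, y)) (hper₂ : ∀ x y, B (x, y + 1) = B (x, y)) (α : ℝ) :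
    winding (fun x => (B (x + α, 2 * x) * rotMat (2 * π * x) * (B (x, 0))⁻¹).complexLinearPart) =
      2 * winding (fun y => (B (0, y)).complexLinearPart) + 1 := by
  have hB₁₀ : B (1, 0) = B (0, 0) := by simpa using hper₁ 0 0
  have hloop : B (1 + α, 2 * 1) = B (0 + α, 2 * 0) := by
    rw [add_comm 1 α, hper₁, zero_add, mul_zero, mul_one,
      show (2 : ℝ) = 0 + 1 + 1 by norm_num, hper₂, hper₂]
  have hrot : rotMat (2 * π * 1) = rotMat (2 * π * 0) := by simp [rotMat]
  have hBinv : Continuous fun x : ℝ => (B (x, 0))⁻¹ :=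
    (hB.comp (by fun_prop : Continuous fun x : ℝ => (x, (0 : ℝ)))).matrix_inv_of_det_ne_zero
      fun x => (hB₀ _).ne'
  have hline := winding_line_of_periodic (b := fun q => (B q).complexLinearPart) (by fun_prop)
    (fun q => complexLinearPart_ne_zero (hB₀ q)) (fun x y => by simp only [hper₁])
    (fun x y => by simp only [hper₂]) α 0 1 2
  simp only [Nat.cast_one, one_mul, Nat.cast_ofNat, zero_add, add_comm α] at hline
  rw [winding_complexLinearPart_mul (by fun_prop) hBinv
      (fun x => by simpa [det_mul, det_rotMat] using hB₀ _)
      (fun x => by rw [det_nonsing_inv, Ring.inverse_eq_inv]; exact inv_pos.2 (hB₀ _))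
      (by rw [hloop, hrot]) (congrArg Inv.inv hB₁₀),
    winding_complexLinearPart_mul (by fun_prop) (by fun_prop)
      (fun x => hB₀ _) (fun x => by simp [det_rotMat]) hloop hrot,
    winding_complexLinearPart_inv (by fun_prop) (fun x => hB₀ _) hB₁₀, hline]
  simp only [complexLinearPart_rotMat]
  rw [← winding_exp_mul_I]
  push_cast
  ring

theorem conjugate_of_rotation_cocycle_not_nullhomotopic_general
    (α : ℝ)
    (B : ℝ × ℝ → Matrix (Fin 2) (Fin 2) ℝ) (hBcont : Continuous B)
    (hBdet : ∀ p, (B p).det = 1)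
    (hBper₁ : ∀ x y : ℝ, B (x + 1, y) = B (x, y))
    (hBper₂ : ∀ x y : ℝ, B (x, y + 1) = B (x, y)) :
    ¬ ∃ (H : ℝ → ℝ × ℝ → Matrix (Fin 2) (Fin 2) ℝ) (c : Matrix (Fin 2) (Fin 2) ℝ),
        Continuous (fun z : ℝ × (ℝ × ℝ) => H z.1 z.2) ∧
        (∀ t p, (H t p).det = 1) ∧
        (∀ t x y, H t (x + 1, y) = H t (x, y)) ∧
        (∀ t x y, H t (x, y + 1) = H t (x, y)) ∧
        (∀ x y : ℝ, H 0 (x, y) =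
          B (x + α, y + 2 * x) * rotMat (2 * π * x) * (B (x, y))⁻¹) ∧
        (∀ p, H 1 p = c) := by
  rintro ⟨H, c, hHc, hHdet, hHper₁, -, hH₀, hH₁⟩
  have hpos : ∀ {M : Matrix (Fin 2) (Fin 2) ℝ}, M.det = 1 → 0 < M.det := fun h => h ▸ one_pos
  obtain ⟨ℓ, hℓ⟩ := exists_winding_eq_intCast (f := fun y => (B (0, y)).complexLinearPart)
    (by fun_prop) (fun y => complexLinearPart_ne_zero (hpos (hBdet _)))
    (by simpa using congrArg complexLinearPart (hBper₂ 0 0))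
  have hnull : winding (fun x => (H 0 (x, 0)).complexLinearPart) = 0 := by
    rw [winding_eq_of_homotopy (h := fun q => (H q.1 (q.2, 0)).complexLinearPart)
      (by fun_prop) (fun q => complexLinearPart_ne_zero (hpos (hHdet _ _)))
      (fun t => by simpa using congrArg complexLinearPart (hHper₁ t 0 0)) 0 1]
    simp only [hH₁]
    exact winding_const (complexLinearPart_ne_zero (hpos (hH₁ (0, 0) ▸ hHdet 1 (0, 0))))
  have hodd : winding (fun x => (H 0 (x, 0)).complexLinearPart) = 2 * ℓ + 1 := by
    simpa only [hH₀, zero_add, hℓ] using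
      winding_cohomologous_cocycle hBcont (fun p => hpos (hBdet p)) hBper₁ hBper₂ α
  have : (2 * ℓ + 1 : ℤ) = 0 := by exact_mod_cast hodd.symm.trans hnull
  omega

/-- Let `f(x,y) = (x+α, y+2x)` on `𝕋²` (with `α` irrational) and
`A(x,y) = R_{2πx}`.  For any continuous `B : 𝕋² → SL(2,ℝ)`, the map
`C(x,y) = B(f(x,y)) A(x,y) B(x,y)⁻¹` is not homotopic to a constant.
Maps on `𝕋² = ℝ²/ℤ²` are formalized as doubly `1`-periodic maps on `ℝ²`, with
values in `SL(2,ℝ)` realized as matrices of determinant one. -/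
theorem conjugate_of_rotation_cocycle_not_nullhomotopic
    (α : ℝ) (hα : Irrational α)
    (B : ℝ × ℝ → Matrix (Fin 2) (Fin 2) ℝ) (hBcont : Continuous B)
    (hBdet : ∀ p, (B p).det = 1)
    (hBper₁ : ∀ x y : ℝ, B (x + 1, y) = B (x, y))
    (hBper₂ : ∀ x y : ℝ, B (x, y + 1) = B (x, y)) :
    ¬ ∃ (H : ℝ → ℝ × ℝ → Matrix (Fin 2) (Fin 2) ℝ) (c : Matrix (Fin 2) (Fin 2) ℝ),
        Continuous (fun z : ℝ × (ℝ × ℝ) => H z.1 z.2) ∧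
        (∀ t p, (H t p).det = 1) ∧
        (∀ t x y, H t (x + 1, y) = H t (x, y)) ∧
        (∀ t x y, H t (x, y + 1) = H t (x, y)) ∧
        (∀ x y : ℝ, H 0 (x, y) =
          B (x + α, y + 2 * x) * rotMat (2 * π * x) * (B (x, y))⁻¹) ∧
        (∀ p, H 1 p = c) :=
  conjugate_of_rotation_cocycle_not_nullhomotopic_general α B hBcont hBdet hBper₁ hBper₂
end
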